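/- arXiv:2412.08835 — 3 statements merged into one kernel-verified Lean document; each statement's English description precedes it below -/
import Mathlib

section
/- Every directed subgraph of a graph G can be expressed as a •-product of its directed edges: the submonoid Mod(G) of (SMult(G), •) generated by all directed subgraphs equals the submonoid generated by the single directed edges of G. -/
namespace GGNN

variable {V : Type*} (G : SimpleGraph V)

/-- A directed edge of the graph `G`: an ordered pair of adjacent vertices. -/
abbrev DEdge := {p : V × V // G.Adj p.1 p.2}

/-- `l` is a (direction-respecting) path whose edges all lie in `E`:
it is a nonempty list of directed edges of `E` in which consecutive edges are
composable. -/
def IsPathIn (E : Finset (DEdge G)) (l : List (DEdge G)) : Prop :=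
  l ≠ [] ∧ l.Chain' (fun d e => d.1.2 = e.1.1) ∧ ∀ e ∈ l, e ∈ E

/-- The path `l` starts at the vertex `v`. -/
def startsAt (l : List (DEdge G)) (v : V) : Prop :=
  ∃ e, l.head? = some e ∧ e.1.1 = v

/-- The path `l` ends at the vertex `v`. -/
def endsAt (l : List (DEdge G)) (v : V) : Prop :=
  ∃ e, l.getLast? = some e ∧ e.1.2 = v

/-- A directed subgraph of `G`: a finite set of directed edges of `G` that is
connected (as an undirected subgraph), and acyclic with at most one directed
path between any two nodes. -/
structure DirSub where
  edges : Finset (DEdge G)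
  connected : ∀ v w : V, (∃ e ∈ edges, e.1.1 = v ∨ e.1.2 = v) →
      (∃ e ∈ edges, e.1.1 = w ∨ e.1.2 = w) →
      Relation.ReflTransGen
        (fun a b => ∃ e ∈ edges, (e.1.1 = a ∧ e.1.2 = b) ∨ (e.1.1 = b ∧ e.1.2 = a)) v w
  uniquePath : ∀ (v w : V) (l₁ l₂ : List (DEdge G)),
      IsPathIn G edges l₁ → IsPathIn G edges l₂ →
      startsAt G l₁ v → startsAt G l₂ v → endsAt G l₁ w → endsAt G l₂ w → l₁ = l₂
  acyclic : ∀ (v : V) (l : List (DEdge G)),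
      IsPathIn G edges l → startsAt G l v → ¬ endsAt G l v

/-- `v ≤_D w`: there is a direction-respecting path in `D` from `v` to `w`. -/
def Reaches (D : DirSub G) (v w : V) : Prop :=
  ∃ l, IsPathIn G D.edges l ∧ startsAt G l v ∧ endsAt G l w

variable [DecidableEq V]

/-- A labelled directed edge: a directed edge of `G` together with a label
`i : ℕ` selecting a copy of it in a directed multigraph. Labels implement the
disjoint union of edge sets. -/
abbrev LEdge := DEdge G × ℕ

/-- Elements of `SMult(G)`: pairs `(M, S)` of a directed multigraph `M`
(a multiset of directed edges of `G`, with multiplicities) and a set `S` of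
paths of labelled edges. -/
abbrev SMult := Multiset (DEdge G) × Set (List (LEdge G))

/-- Relabelling of the paths of the second summand in the disjoint union
`M ⊕ N` of edge multisets: the label of a copy of `e` is shifted by the number
of copies of `e` in `M`. -/
def lshift (M : Multiset (DEdge G)) (l : List (LEdge G)) : List (LEdge G) :=
  l.map fun p => (p.1, p.2 + M.count p.1)

/-- Two (nonempty) paths are composable when the endpoint of the first is the
start point of the second. -/
def LComposable (p q : List (LEdge G)) : Prop :=
  ∃ d e, p.getLast? = some d ∧ q.head? = some e ∧ d.1.1.2 = e.1.1.1

/-- The monoid operation `(M,S) • (N,T) = (M ⊕ N, S ⋆ T)` on `SMult(G)`: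
edge multisets are merged (disjointly, via relabelling), and `S ⋆ T` is the
union of `S`, `T` and all composites of a path of `S` followed by a composable
path of `T`. -/
def smul (x y : SMult G) : SMult G :=
  (x.1 + y.1,
    x.2 ∪ (lshift G x.1 '' y.2) ∪
      {r | ∃ p ∈ x.2, ∃ q ∈ lshift G x.1 '' y.2, LComposable G p q ∧ r = p ++ q})

/-- The identity of `SMult(G)`: the empty graph with no paths. -/
def sone : SMult G := (0, ∅)

/-- `l` is a path in the directed multigraph `M`: a nonempty chain of
composable labelled edges, each of which is a copy of an edge of `M`. -/
def LIsPathIn (M : Multiset (DEdge G)) (l : List (LEdge G)) : Prop :=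
  l ≠ [] ∧ l.Chain' (fun a b => a.1.1.2 = b.1.1.1) ∧ ∀ p ∈ l, p.2 < M.count p.1

/-- A directed subgraph `D`, viewed as the element `(D, Paths(D))` of
`SMult(G)`. -/
def toSM (D : DirSub G) : SMult G :=
  (D.edges.val, {l | LIsPathIn G D.edges.val l})

/-- A single directed edge, as an element of `SMult(G)`. -/
def edgeElem (e : DEdge G) : SMult G := ({e}, {[(e, 0)]})

/-- The submonoid-as-a-set generated by `A` under the binary operation `o`
with identity `e`: all finite `o`-products of elements of `A`. -/
def GenBy {α : Type*} (A : Set α) (o : α → α → α) (e : α) : Set α :=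
  {x | ∃ l : List α, (∀ a ∈ l, a ∈ A) ∧ l.foldr o e = x}

/-- `Mod(G)`: the submonoid of `(SMult(G), •)` generated by the directed
subgraphs of `G`. -/
def ModSet : Set (SMult G) :=
  GenBy (Set.range (toSM G)) (smul G) (sone G)

end GGNN

/-!
`Mod(G)` is generated by the elements `(D, Paths(D))`, and `•` is associative with left identity
`(∅, ∅)`, so it suffices to write each `(D, Paths(D))` as a product of edges. Since `D` is acyclic,
"edge `e` leads into edge `f`" generates a partial order on the edges of `D`; list them as
`e₁, …, eₙ` along a linear extension. The paths of `e₁ • ⋯ • eₙ` are exactly the nonempty chains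
that are sublists of `[e₁, …, eₙ]`, and a path of `D` meets its edges in increasing order, so
these are the paths of `D`. Conversely, a single edge is itself a directed subgraph.
-/

open scoped List

open Relation in
lemma Finset.exists_list_isChain_sublist {α : Type*} {R : α → α → Prop}
    (hR : ∀ a, ¬ TransGen R a a) (s : Finset α) :
    ∃ L : List α, (L : Multiset α) = s.val ∧
      ∀ l : List α, l.IsChain R → (∀ x ∈ l, x ∈ s) → l <+ L := by
  classical
  have : IsPartialOrder α (ReflTransGen R) :=
    { refl := fun _ => .refl
      trans := fun _ _ _ => ReflTransGen.trans
      antisymm := fun a b hab hba => by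
        rcases reflTransGen_iff_eq_or_transGen.mp hab with rfl | hab'
        · rfl
        rcases reflTransGen_iff_eq_or_transGen.mp hba with rfl | hba'
        · rfl
        exact absurd (hab'.trans hba') (hR a) }
  obtain ⟨r, _, hr⟩ := extend_partialOrder (ReflTransGen R)
  refine ⟨s.sort r, s.sort_eq r, fun l hl hls => ?_⟩
  have htrans : l.Pairwise (TransGen R) :=
    List.isChain_iff_pairwise.mp (hl.imp fun _ _ => .single)
  have hnodup : l.Nodup := htrans.imp fun {a _} h => by rintro rfl; exact hR a h
  exact List.sublist_of_subperm_of_pairwise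
    (List.subperm_of_subset hnodup fun x hx => (s.mem_sort r).mpr (hls x hx))
    (htrans.imp fun h => hr _ _ h.to_reflTransGen) (s.pairwise_sort r)

namespace GGNN

section GenBy

variable {α : Type*} {o : α → α → α} {e : α}

lemma foldr_append_of_assoc (hassoc : ∀ a b c, o (o a b) c = o a (o b c))
    (hone : ∀ a, o e a = a) (l₁ l₂ : List α) :
    (l₁ ++ l₂).foldr o e = o (l₁.foldr o e) (l₂.foldr o e) := by
  induction l₁ with
  | nil => exact (hone _).symm
  | cons a t ih => rw [List.cons_append, List.foldr_cons, List.foldr_cons, ih, hassoc]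

lemma genBy_mono {A B : Set α} (h : A ⊆ B) : GenBy A o e ⊆ GenBy B o e :=
  fun _ ⟨l, hl, hx⟩ => ⟨l, fun a ha => h (hl a ha), hx⟩

lemma genBy_subset_genBy_of_subset (hassoc : ∀ a b c, o (o a b) c = o a (o b c))
    (hone : ∀ a, o e a = a) {A B : Set α} (h : A ⊆ GenBy B o e) :
    GenBy A o e ⊆ GenBy B o e := by
  rintro _ ⟨l, hl, rfl⟩
  induction l with
  | nil => exact ⟨[], by simp, rfl⟩
  | cons a t ih =>
    obtain ⟨la, hla, ha⟩ := h (hl a List.mem_cons_self)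
    obtain ⟨lt, hlt, ht⟩ := ih fun b hb => hl b (List.mem_cons_of_mem a hb)
    refine ⟨la ++ lt, fun b hb => (List.mem_append.mp hb).elim (hla b) (hlt b), ?_⟩
    rw [foldr_append_of_assoc hassoc hone, ha, ht, List.foldr_cons]

end GenBy

variable {V : Type*} {G : SimpleGraph V}

/-- The path component `S ⋆ T` of a product, for already relabelled `T`. -/
def pathStar (S T : Set (List (LEdge G))) : Set (List (LEdge G)) :=
  S ∪ T ∪ {r | ∃ p ∈ S, ∃ q ∈ T, LComposable G p q ∧ r = p ++ q}

lemma LComposable.ne_nil {p q : List (LEdge G)} (h : LComposable G p q) : p ≠ [] ∧ q ≠ [] := by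
  obtain ⟨d, e, hd, he, -⟩ := h
  exact ⟨fun h => by simp [h] at hd, fun h => by simp [h] at he⟩

lemma lComposable_append_left {q : List (LEdge G)} (hq : q ≠ []) (p r : List (LEdge G)) :
    LComposable G (p ++ q) r ↔ LComposable G q r := by
  simp only [LComposable, List.getLast?_append_of_ne_nil _ hq]

lemma lComposable_append_right {q : List (LEdge G)} (hq : q ≠ []) (p r : List (LEdge G)) :
    LComposable G p (q ++ r) ↔ LComposable G p q := by
  simp only [LComposable, List.head?_append_of_ne_nil _ hq]

lemma pathStar_assoc (A B C : Set (List (LEdge G))) :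
    pathStar (pathStar A B) C = pathStar A (pathStar B C) := by
  ext r
  simp only [pathStar, Set.mem_union, Set.mem_ofPred_eq]
  constructor
  · rintro ((((hr | hr) | ⟨p, hp, q, hq, hpq, rfl⟩) | hr) |
      ⟨p, ((hp | hp) | ⟨a, ha, b, hb, hab, rfl⟩), q, hq, hpq, rfl⟩)
    · exact .inl (.inl hr)
    · exact .inl (.inr (.inl (.inl hr)))
    · exact .inr ⟨p, hp, q, .inl (.inl hq), hpq, rfl⟩
    · exact .inl (.inr (.inl (.inr hr)))
    · exact .inr ⟨p, hp, q, .inl (.inr hq), hpq, rfl⟩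
    · exact .inl (.inr (.inr ⟨p, hp, q, hq, hpq, rfl⟩))
    · have hb' := hab.ne_nil.2
      refine .inr ⟨a, ha, b ++ q, .inr ⟨b, hb, q, hq, ?_, rfl⟩, ?_, (List.append_assoc ..)⟩
      · exact (lComposable_append_left hb' a q).mp hpq
      · exact (lComposable_append_right hb' a q).mpr hab
  · rintro ((hr | ((hr | hr) | ⟨b, hb, c, hc, hbc, rfl⟩)) |
      ⟨p, hp, q, ((hq | hq) | ⟨b, hb, c, hc, hbc, rfl⟩), hpq, rfl⟩)
    · exact .inl (.inl (.inl (.inl hr)))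
    · exact .inl (.inl (.inl (.inr hr)))
    · exact .inl (.inr hr)
    · exact .inr ⟨b, .inl (.inr hb), c, hc, hbc, rfl⟩
    · exact .inl (.inl (.inr ⟨p, hp, q, hq, hpq, rfl⟩))
    · exact .inr ⟨p, .inl (.inl hp), q, hq, hpq, rfl⟩
    · have hb' := hbc.ne_nil.1
      refine .inr ⟨p ++ b, .inr ⟨p, hp, b, hb, ?_, rfl⟩, c, hc, ?_, (List.append_assoc ..).symm⟩
      · exact (lComposable_append_right hb' p c).mp hpq
      · exact (lComposable_append_left hb' p c).mpr hbc

def sublistPaths (L : List (LEdge G)) : Set (List (LEdge G)) :=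
  {l | l ≠ [] ∧ l.IsChain (fun a b => a.1.1.2 = b.1.1.1) ∧ l <+ L}

lemma pathStar_singleton_sublistPaths (a : LEdge G) (L : List (LEdge G)) :
    pathStar {[a]} (sublistPaths L) = sublistPaths (a :: L) := by
  ext r
  simp only [pathStar, sublistPaths, Set.mem_union, Set.mem_singleton_iff, Set.mem_ofPred_eq]
  constructor
  · rintro ((rfl | ⟨hne, hch, hsub⟩) | ⟨p, rfl, q, ⟨hne, hch, hsub⟩, ⟨_, e, hd, he, hae⟩, rfl⟩)
    · exact ⟨List.cons_ne_nil _ _, List.isChain_singleton _, (List.nil_sublist L).cons_cons a⟩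
    · exact ⟨hne, hch, hsub.cons a⟩
    · refine ⟨List.cons_ne_nil _ _, List.isChain_cons.mpr ⟨fun b hb => ?_, hch⟩, hsub.cons_cons a⟩
      cases List.getLast?_singleton ▸ hd
      cases he.symm.trans hb
      exact hae
  · rintro ⟨hne, hch, hsub⟩
    rcases List.sublist_cons_iff.mp hsub with hsub | ⟨q, rfl, hq⟩
    · exact .inl (.inr ⟨hne, hch, hsub⟩)
    cases q with
    | nil => exact .inl (.inl rfl)
    | cons b q =>
      rw [List.isChain_cons_cons] at hch
      exact .inr ⟨[a], rfl, b :: q, ⟨List.cons_ne_nil _ _, hch.2, hq⟩,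
        ⟨a, b, rfl, rfl, hch.1⟩, rfl⟩

lemma mem_sublistPaths_map_iff (L : List (DEdge G)) (l : List (LEdge G)) :
    l ∈ sublistPaths (L.map (·, 0)) ↔
      (l.map Prod.fst ≠ [] ∧ (l.map Prod.fst).IsChain (fun d e => d.1.2 = e.1.1) ∧
        l.map Prod.fst <+ L) ∧ ∀ p ∈ l, p.2 = 0 := by
  constructor
  · rintro ⟨hne, hch, hsub⟩
    obtain ⟨l', hl', rfl⟩ := List.sublist_map_iff.mp hsub
    simp_all [List.isChain_map, Function.comp_def]
  · rintro ⟨⟨hne, hch, hsub⟩, h0⟩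
    have hl : (l.map Prod.fst).map (·, 0) = l := by
      rw [List.map_map]
      conv_rhs => rw [← List.map_id l]
      exact List.map_congr_left fun p hp => Prod.ext rfl (h0 p hp).symm
    rw [← hl]
    exact ⟨by simpa using hne, (List.isChain_map _).mpr hch, hsub.map _⟩

section DirSub

open Relation

def Feeds (D : DirSub G) (e f : DEdge G) : Prop :=
  e ∈ D.edges ∧ f ∈ D.edges ∧ e.1.2 = f.1.1

lemma DirSub.not_transGen_feeds (D : DirSub G) (e : DEdge G) : ¬ TransGen (Feeds D) e e := by
  intro h
  obtain ⟨c, hec, hce⟩ := TransGen.head'_iff.mp h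
  obtain ⟨l, hne, hch, hhead, hlast⟩ := List.exists_isChain_ne_nil_of_relationReflTransGen hce
  -- `l` runs from `c` to `e`, so it starts at `c.1.1 = e.1.2` and ends at `e.1.2`
  refine D.acyclic e.1.2 l ⟨hne, hch.imp fun _ _ h => h.2.2, ?_⟩
    ⟨c, hhead ▸ List.head?_eq_some_head hne, hec.2.2.symm⟩
    ⟨e, hlast ▸ List.getLast?_eq_some_getLast hne, rfl⟩
  exact hch.induction (· ∈ D.edges) l (fun _ _ h _ => h.2.1) fun _ => hhead ▸ hec.2.1

lemma DirSub.exists_list_isPathIn_iff_sublist (D : DirSub G) :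
    ∃ L : List (DEdge G), (L : Multiset (DEdge G)) = D.edges.val ∧
      ∀ l, IsPathIn G D.edges l ↔
        l ≠ [] ∧ l.IsChain (fun d e => d.1.2 = e.1.1) ∧ l <+ L := by
  obtain ⟨L, hLval, hL⟩ := D.edges.exists_list_isChain_sublist D.not_transGen_feeds
  refine ⟨L, hLval, fun l => ⟨fun ⟨hne, hch, hmem⟩ => ⟨hne, hch, ?_⟩, fun ⟨hne, hch, hsub⟩ =>
    ⟨hne, hch, fun x hx => ?_⟩⟩⟩
  · exact hL l (hch.imp_of_mem_imp fun a b ha hb hab => ⟨hmem a ha, hmem b hb, hab⟩) hmem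
  · rw [← Finset.mem_val, ← hLval, Multiset.mem_coe]
    exact hsub.subset hx

lemma isPathIn_singleton_iff {e : DEdge G} {l : List (DEdge G)} :
    IsPathIn G {e} l ↔ l = [e] := by
  refine ⟨fun ⟨hne, hch, hmem⟩ => ?_, ?_⟩
  · have hmem' : ∀ x ∈ l, x = e := fun x hx => Finset.mem_singleton.mp (hmem x hx)
    match l, hne, hch, hmem' with
    | [x], _, _, hmem' => rw [hmem' x List.mem_cons_self]
    | x :: y :: _, _, hch, hmem' =>
      rw [List.Chain', List.isChain_cons_cons, hmem' x (by simp), hmem' y (by simp)] at hch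
      exact absurd hch.1.symm (G.ne_of_adj e.2)
  · rintro rfl
    exact ⟨List.cons_ne_nil _ _, List.isChain_singleton e, by simp⟩

def DirSub.single (e : DEdge G) : DirSub G where
  edges := {e}
  connected := by
    rintro v w ⟨_, he₁, hv⟩ ⟨_, he₂, hw⟩
    rw [Finset.mem_singleton] at he₁ he₂
    subst he₁ he₂
    rcases hv with rfl | rfl <;> rcases hw with rfl | rfl <;>
      first
      | exact .refl
      | exact .single ⟨_, Finset.mem_singleton_self _, by simp⟩
  uniquePath := by
    intro v w l₁ l₂ h₁ h₂ _ _ _ _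
    rw [isPathIn_singleton_iff.mp h₁, isPathIn_singleton_iff.mp h₂]
  acyclic := by
    rintro v l hl ⟨_, hs, rfl⟩ ⟨_, he, hev⟩
    rw [isPathIn_singleton_iff.mp hl] at hs he
    cases Option.some.inj hs
    cases Option.some.inj he
    exact G.ne_of_adj e.2 hev.symm

end DirSub

variable [DecidableEq V]

lemma smul_eq (x y : SMult G) :
    smul G x y = (x.1 + y.1, pathStar x.2 (lshift G x.1 '' y.2)) := rfl

lemma lshift_zero : lshift G 0 = id := by
  funext l
  simp [lshift]

lemma lshift_lshift (M N : Multiset (DEdge G)) (l : List (LEdge G)) :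
    lshift G M (lshift G N l) = lshift G (M + N) l := by
  simp only [lshift, List.map_map, Function.comp_def, Multiset.count_add, Nat.add_assoc,
    Nat.add_comm (N.count _)]

lemma lshift_append (M : Multiset (DEdge G)) (l₁ l₂ : List (LEdge G)) :
    lshift G M (l₁ ++ l₂) = lshift G M l₁ ++ lshift G M l₂ :=
  List.map_append ..

lemma lComposable_lshift (M : Multiset (DEdge G)) (p q : List (LEdge G)) :
    LComposable G (lshift G M p) (lshift G M q) ↔ LComposable G p q := by
  simp only [LComposable, lshift, List.getLast?_map, List.head?_map, Option.map_eq_some_iff]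
  constructor
  · rintro ⟨_, _, ⟨d, hd, rfl⟩, ⟨e, he, rfl⟩, h⟩
    exact ⟨d, e, hd, he, h⟩
  · rintro ⟨d, e, hd, he, h⟩
    exact ⟨_, _, ⟨d, hd, rfl⟩, ⟨e, he, rfl⟩, h⟩

lemma image_lshift_pathStar (M : Multiset (DEdge G)) (S T : Set (List (LEdge G))) :
    lshift G M '' pathStar S T = pathStar (lshift G M '' S) (lshift G M '' T) := by
  simp only [pathStar, Set.image_union]
  congr 1
  ext r
  constructor
  · rintro ⟨_, ⟨p, hp, q, hq, hpq, rfl⟩, rfl⟩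
    exact ⟨_, ⟨p, hp, rfl⟩, _, ⟨q, hq, rfl⟩, (lComposable_lshift M p q).mpr hpq,
      lshift_append M p q⟩
  · rintro ⟨_, ⟨p, hp, rfl⟩, _, ⟨q, hq, rfl⟩, hpq, rfl⟩
    exact ⟨p ++ q, ⟨p, hp, q, hq, (lComposable_lshift M p q).mp hpq, rfl⟩,
      lshift_append M p q⟩

lemma smul_assoc (x y z : SMult G) :
    smul G (smul G x y) z = smul G x (smul G y z) := by
  simp only [smul_eq, add_assoc, image_lshift_pathStar, Set.image_image, lshift_lshift,
    pathStar_assoc]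

lemma sone_smul (x : SMult G) : smul G (sone G) x = x := by
  simp [smul_eq, sone, pathStar, lshift_zero]

lemma lshift_eq_self {M : Multiset (DEdge G)} {l : List (LEdge G)}
    (h : ∀ p ∈ l, p.1 ∉ M) : lshift G M l = l := by
  conv_rhs => rw [← List.map_id l]
  exact List.map_congr_left fun p hp => by simp [Multiset.count_eq_zero_of_notMem (h p hp)]

lemma foldr_smul_edgeElem {L : List (DEdge G)} (hL : L.Nodup) :
    (L.map (edgeElem G)).foldr (smul G) (sone G) =
      ((L : Multiset (DEdge G)), sublistPaths (L.map (·, 0))) := by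
  induction L with
  | nil =>
    refine Prod.ext rfl (Set.eq_empty_iff_forall_notMem.mpr ?_).symm
    rintro l ⟨hne, -, hsub⟩
    exact hne (List.sublist_nil.mp hsub)
  | cons e L ih =>
    obtain ⟨he, hL⟩ := List.nodup_cons.mp hL
    have hfix : lshift G {e} '' sublistPaths (L.map (·, 0)) = sublistPaths (L.map (·, 0)) := by
      refine (Set.image_congr fun l hl => lshift_eq_self fun p hp => ?_).trans (Set.image_id _)
      obtain ⟨f, hf, rfl⟩ := List.mem_map.mp (hl.2.2.subset hp)
      rw [Multiset.mem_singleton]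
      rintro rfl
      exact he hf
    rw [List.map_cons, List.foldr_cons, ih hL, smul_eq]
    exact Prod.ext (Multiset.singleton_add e L) <|
      (congrArg _ hfix).trans (pathStar_singleton_sublistPaths _ _)

lemma lIsPathIn_val_iff (E : Finset (DEdge G)) (l : List (LEdge G)) :
    LIsPathIn G E.val l ↔ IsPathIn G E (l.map Prod.fst) ∧ ∀ p ∈ l, p.2 = 0 := by
  have hlabel : ∀ p : LEdge G, p.2 < E.val.count p.1 ↔ p.1 ∈ E ∧ p.2 = 0 := by
    intro p
    simp only [Multiset.count_eq_of_nodup E.nodup, Finset.mem_val]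
    split_ifs <;> simp [*]
  simp only [LIsPathIn, IsPathIn, List.Chain', List.isChain_map, ne_eq, List.map_eq_nil_iff,
    List.forall_mem_map, hlabel]
  grind

lemma toSM_eq_foldr_edgeElem (D : DirSub G) :
    ∃ L : List (DEdge G), toSM G D = (L.map (edgeElem G)).foldr (smul G) (sone G) := by
  obtain ⟨L, hLval, hpaths⟩ := D.exists_list_isPathIn_iff_sublist
  have hnodup : L.Nodup := by
    rw [← Multiset.coe_nodup, hLval]
    exact D.edges.nodup
  refine ⟨L, ?_⟩
  rw [foldr_smul_edgeElem hnodup]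
  refine Prod.ext hLval.symm (Set.ext fun l => ?_)
  rw [mem_sublistPaths_map_iff, ← hpaths]
  exact lIsPathIn_val_iff D.edges l

lemma toSM_single (e : DEdge G) : toSM G (DirSub.single e) = edgeElem G e := by
  refine Prod.ext rfl (Set.ext fun l => ?_)
  simp only [toSM, edgeElem, Set.mem_ofPred_eq, Set.mem_singleton_iff]
  rw [lIsPathIn_val_iff, DirSub.single, isPathIn_singleton_iff, List.map_eq_singleton_iff]
  constructor
  · rintro ⟨⟨p, rfl, rfl⟩, h0⟩
    exact congrArg ([·]) (Prod.ext rfl (h0 p List.mem_cons_self))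
  · rintro rfl
    simp

variable (G) in
/-- Directed edges generate `Mod(G)`: the submonoid of `(SMult(G), •)`
generated by all directed subgraphs of `G` coincides with the submonoid
generated by the single directed edges of `G`. -/
theorem modSet_eq_genBy_edges :
    ModSet G = GenBy (Set.range (edgeElem G)) (smul G) (sone G) := by
  refine (genBy_subset_genBy_of_subset smul_assoc sone_smul ?_).antisymm (genBy_mono ?_)
  · rintro _ ⟨D, rfl⟩
    obtain ⟨L, hL⟩ := toSM_eq_foldr_edgeElem D
    exact ⟨L.map (edgeElem G), List.forall_mem_map.mpr fun e _ => ⟨e, rfl⟩, hL.symm⟩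
  · rintro _ ⟨e, rfl⟩
    exact ⟨DirSub.single e, toSM_single e⟩

end GGNN
end

section
/- The transformation Tr sending a monoid element D₁ • D₂ • ⋯ • D_k of Mod(G) to Rep(D₁) ∘ Rep(D₂) ∘ ⋯ ∘ Rep(D_k) is well-defined (independent of the decomposition), and the (i,j) entry of Tr(M,S) equals the number of paths in S from v_i to v_j; moreover Tr is a surjective monoid homomorphism from (Mod(G), •) to (Mom(G), ∘). -/
/-!
Every path of `(M, S) • (N, T)` is a path of `S`, a relabelled path of `T`, or a concatenation
`p ++ q` of a path `p` of `S` with a composable relabelled path `q` of `T`. The labels tell these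
apart: those on paths of `S` are smaller than the multiplicities in `M`, the shifted ones are not.
So each concatenation splits in only one way, at a vertex `u`, and if `A` and `B` count the paths
of the two factors, the product has `A + B + A * B = A ∘ B` paths. A directed subgraph has at most
one path between two vertices, so its path count is `Rep(D)`, and by induction
`Rep(D₁) ∘ ⋯ ∘ Rep(D_k)` counts the paths of `D₁ • ⋯ • D_k`. The count depends only on the
product, which gives well-definedness, and the homomorphism property is associativity of `∘`.
-/

namespace GGNN

variable {V : Type*} (G : SimpleGraph V)

variable [DecidableEq V]

/-- The operation `A ∘ B = A + B + A·B` on matrices. -/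
def op [Fintype V] (A B : Matrix V V ℝ) : Matrix V V ℝ := A + B + A * B

open scoped Classical in
/-- The matrix representation `Rep(D)` of a directed subgraph: entry `(v, w)`
is `1` if `v ≤_D w` (there is a directed path in `D` from `v` to `w`) and `0`
otherwise. -/
noncomputable def Rep [Fintype V] (D : DirSub G) : Matrix V V ℝ :=
  Matrix.of fun v w => if Reaches G D v w then 1 else 0

/-- The labelled path `l` starts at the vertex `v`. -/
def startsAtL (l : List (LEdge G)) (v : V) : Prop :=
  ∃ p, l.head? = some p ∧ p.1.1.1 = v

/-- The labelled path `l` ends at the vertex `v`. -/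
def endsAtL (l : List (LEdge G)) (v : V) : Prop :=
  ∃ p, l.getLast? = some p ∧ p.1.1.2 = v

/-- The `•`-product `D₁ • D₂ • ⋯ • D_k` in `Mod(G)` of a list of directed
subgraphs. -/
def prodSM (L : List (DirSub G)) : SMult G :=
  (L.map (toSM G)).foldr (smul G) (sone G)

/-- The `∘`-product `A₁ ∘ A₂ ∘ ⋯ ∘ A_k` of a list of matrices. -/
def prodMat [Fintype V] (L : List (Matrix V V ℝ)) : Matrix V V ℝ :=
  L.foldr (op) 0

/-- `Mom(G)`: the submonoid of `(Mat_n(ℝ), ∘)` generated by the matrix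
representations of the directed subgraphs of `G`. -/
noncomputable def MomSet [Fintype V] : Set (Matrix V V ℝ) :=
  GenBy (Set.range (Rep G)) (op) 0

end GGNN

namespace GGNN

section Circ

variable {V : Type*} [Fintype V]

theorem op_assoc (A B C : Matrix V V ℝ) : op (op A B) C = op A (op B C) := by
  simp only [op]
  noncomm_ring

theorem zero_op (A : Matrix V V ℝ) : op 0 A = A := by
  simp [op]

theorem prodMat_cons (A : Matrix V V ℝ) (L : List (Matrix V V ℝ)) :
    prodMat (A :: L) = op A (prodMat L) :=
  rfl

theorem prodMat_append (L₁ L₂ : List (Matrix V V ℝ)) :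
    prodMat (L₁ ++ L₂) = op (prodMat L₁) (prodMat L₂) := by
  induction L₁ with
  | nil => exact (zero_op _).symm
  | cons A L ih => rw [List.cons_append, prodMat_cons, prodMat_cons, ih, op_assoc]

end Circ

theorem append_inj_of_forall_of_forall_not {α : Type*} {P : α → Prop}
    {p q p' q' : List α} (hp : ∀ a ∈ p, P a) (hp' : ∀ a ∈ p', P a)
    (hq : ∀ a ∈ q, ¬ P a) (hq' : ∀ a ∈ q', ¬ P a) (h : p ++ q = p' ++ q') :
    p = p' ∧ q = q' := by
  classical
  refine List.append_inj h ?_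
  have hcount := congrArg (List.countP (fun a => decide (P a))) h
  have hp : p.countP (fun a => decide (P a)) = p.length := List.countP_eq_length.mpr (by simpa)
  have hp' : p'.countP (fun a => decide (P a)) = p'.length := List.countP_eq_length.mpr (by simpa)
  have hq : q.countP (fun a => decide (P a)) = 0 := List.countP_eq_zero.mpr (by simpa)
  have hq' : q'.countP (fun a => decide (P a)) = 0 := List.countP_eq_zero.mpr (by simpa)
  simpa only [List.countP_append, hp, hp', hq, hq', add_zero] using hcount

section Paths

variable {V : Type*} (G : SimpleGraph V)

def pathsBetween (S : Set (List (LEdge G))) (v w : V) : Set (List (LEdge G)) :=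
  {l | l ∈ S ∧ startsAtL G l v ∧ endsAtL G l w}

def concatSet (S T : Set (List (LEdge G))) : Set (List (LEdge G)) :=
  {r | ∃ p ∈ S, ∃ q ∈ T, LComposable G p q ∧ r = p ++ q}

def IsPathCount (S : Set (List (LEdge G))) (A : Matrix V V ℝ) : Prop :=
  ∀ v w, (pathsBetween G S v w).Finite ∧ (Nat.card (pathsBetween G S v w) : ℝ) = A v w

variable {G}

theorem pathsBetween_subset (S : Set (List (LEdge G))) (v w : V) : pathsBetween G S v w ⊆ S :=
  fun _ hl => hl.1

theorem pathsBetween_union (S T : Set (List (LEdge G))) (v w : V) :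
    pathsBetween G (S ∪ T) v w = pathsBetween G S v w ∪ pathsBetween G T v w := by
  ext l
  exact or_and_right

theorem ne_nil_of_startsAtL {l : List (LEdge G)} {v : V} (h : startsAtL G l v) : l ≠ [] := by
  rintro rfl
  obtain ⟨a, ha, -⟩ := h
  simp at ha

theorem ne_nil_of_endsAtL {l : List (LEdge G)} {v : V} (h : endsAtL G l v) : l ≠ [] := by
  rintro rfl
  obtain ⟨a, ha, -⟩ := h
  simp at ha

theorem endsAtL.eq {l : List (LEdge G)} {u u' : V} (h : endsAtL G l u) (h' : endsAtL G l u') :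
    u = u' := by
  obtain ⟨d, hd, rfl⟩ := h
  obtain ⟨d', hd', rfl⟩ := h'
  rw [hd, Option.some_inj] at hd'
  rw [hd']

theorem startsAtL_append {p q : List (LEdge G)} {v : V} (hp : p ≠ []) :
    startsAtL G (p ++ q) v ↔ startsAtL G p v := by
  simp [startsAtL, List.head?_append, List.head?_eq_some_head hp]

theorem endsAtL_append {p q : List (LEdge G)} {w : V} (hq : q ≠ []) :
    endsAtL G (p ++ q) w ↔ endsAtL G q w := by
  simp [endsAtL, List.getLast?_append, List.getLast?_eq_some_getLast hq]

theorem startsAtL_iff_map_fst {l : List (LEdge G)} {v : V} :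
    startsAtL G l v ↔ startsAt G (l.map Prod.fst) v := by
  simp [startsAtL, startsAt, List.head?_map]

theorem endsAtL_iff_map_fst {l : List (LEdge G)} {v : V} :
    endsAtL G l v ↔ endsAt G (l.map Prod.fst) v := by
  simp [endsAtL, endsAt, List.getLast?_map]

theorem IsPathCount.union {S T : Set (List (LEdge G))} {A B : Matrix V V ℝ} (hST : Disjoint S T)
    (hS : IsPathCount G S A) (hT : IsPathCount G T B) : IsPathCount G (S ∪ T) (A + B) := by
  intro v w
  obtain ⟨hSf, hSc⟩ := hS v w
  obtain ⟨hTf, hTc⟩ := hT v w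
  have hdisj : Disjoint (pathsBetween G S v w) (pathsBetween G T v w) :=
    hST.mono (pathsBetween_subset S v w) (pathsBetween_subset T v w)
  rw [pathsBetween_union]
  refine ⟨hSf.union hTf, ?_⟩
  rw [Nat.card_coe_set_eq] at hSc hTc ⊢
  rw [Set.ncard_union_eq hdisj hSf hTf, Nat.cast_add, hSc, hTc, Matrix.add_apply]

theorem append_mem_pathsBetween_concatSet {S T : Set (List (LEdge G))} {v u w : V}
    {p q : List (LEdge G)} (hp : p ∈ pathsBetween G S v u) (hq : q ∈ pathsBetween G T u w) :
    p ++ q ∈ pathsBetween G (concatSet G S T) v w := by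
  obtain ⟨hpS, hpv, ⟨d, hd, hdu⟩⟩ := hp
  obtain ⟨hqT, ⟨e, he, heu⟩, hqw⟩ := hq
  refine ⟨⟨p, hpS, q, hqT, ⟨d, e, hd, he, hdu.trans heu.symm⟩, rfl⟩, ?_, ?_⟩
  · exact (startsAtL_append (ne_nil_of_startsAtL hpv)).mpr hpv
  · exact (endsAtL_append (ne_nil_of_endsAtL hqw)).mpr hqw

section Separated

variable {P : LEdge G → Prop} {S T : Set (List (LEdge G))}

theorem disjoint_of_separated (hS : ∀ l ∈ S, l ≠ [] ∧ ∀ a ∈ l, P a)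
    (hT : ∀ l ∈ T, ∀ a ∈ l, ¬ P a) : Disjoint S T := by
  refine Set.disjoint_left.mpr fun l hlS hlT => ?_
  obtain ⟨a, ha⟩ := List.exists_mem_of_ne_nil l (hS l hlS).1
  exact hT l hlT a ha ((hS l hlS).2 a ha)

theorem disjoint_union_concatSet_of_separated (hS : ∀ l ∈ S, l ≠ [] ∧ ∀ a ∈ l, P a)
    (hT : ∀ l ∈ T, ∀ a ∈ l, ¬ P a) : Disjoint (S ∪ T) (concatSet G S T) := by
  rintro _ hl hcat l hmem
  obtain ⟨p, hpS, q, hqT, ⟨d, e, hd, he, -⟩, rfl⟩ := hcat hmem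
  have hdp : d ∈ p := List.mem_of_mem_getLast? hd
  have heq : e ∈ q := List.mem_of_mem_head? he
  rcases hl hmem with hS' | hT'
  · exact hT q hqT e heq ((hS _ hS').2 e (List.mem_append_right p heq))
  · exact hT _ hT' d (List.mem_append_left q hdp) ((hS p hpS).2 d hdp)

theorem bijective_append_pathsBetween (hS : ∀ l ∈ S, l ≠ [] ∧ ∀ a ∈ l, P a)
    (hT : ∀ l ∈ T, ∀ a ∈ l, ¬ P a) (v w : V) :
    Function.Bijective fun x : Σ u, pathsBetween G S v u × pathsBetween G T u w =>
      (⟨x.2.1.1 ++ x.2.2.1, append_mem_pathsBetween_concatSet x.2.1.2 x.2.2.2⟩ :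
        pathsBetween G (concatSet G S T) v w) := by
  constructor
  · rintro ⟨u, ⟨p, hp⟩, ⟨q, hq⟩⟩ ⟨u', ⟨p', hp'⟩, ⟨q', hq'⟩⟩ h
    obtain ⟨rfl, rfl⟩ := append_inj_of_forall_of_forall_not (hS p hp.1).2 (hS p' hp'.1).2
      (hT q hq.1) (hT q' hq'.1) (Subtype.mk.inj h)
    obtain rfl := hp.2.2.eq hp'.2.2
    rfl
  · rintro ⟨_, ⟨p, hpS, q, hqT, ⟨d, e, hd, he, hde⟩, rfl⟩, hs, hw⟩
    have hq : q ≠ [] := by rintro rfl; simp at he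
    exact ⟨⟨d.1.1.2, ⟨p, hpS, (startsAtL_append (hS p hpS).1).mp hs, d, hd, rfl⟩,
      ⟨q, hqT, ⟨e, he, hde.symm⟩, (endsAtL_append hq).mp hw⟩⟩, rfl⟩

theorem IsPathCount.concatSet [Fintype V] {A B : Matrix V V ℝ}
    (hS : ∀ l ∈ S, l ≠ [] ∧ ∀ a ∈ l, P a) (hT : ∀ l ∈ T, ∀ a ∈ l, ¬ P a)
    (hA : IsPathCount G S A) (hB : IsPathCount G T B) :
    IsPathCount G (concatSet G S T) (A * B) := by
  intro v w
  have := fun u => (hA v u).1.to_subtype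
  have := fun u => (hB u w).1.to_subtype
  let e := Equiv.ofBijective _ (bijective_append_pathsBetween hS hT v w)
  refine ⟨Set.finite_coe_iff.mp (Finite.of_equiv _ e), ?_⟩
  rw [← Nat.card_congr e, Nat.card_sigma, Matrix.mul_apply, Nat.cast_sum]
  refine Finset.sum_congr rfl fun u _ => ?_
  rw [Nat.card_prod, Nat.cast_mul, (hA v u).2, (hB u w).2]

end Separated

end Paths

section Counting

variable {V : Type*} (G : SimpleGraph V) [DecidableEq V]

theorem startsAtL_lshift {M : Multiset (DEdge G)} {l : List (LEdge G)} {v : V} :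
    startsAtL G (lshift G M l) v ↔ startsAtL G l v := by
  simp [startsAtL, lshift, List.head?_map]

theorem endsAtL_lshift {M : Multiset (DEdge G)} {l : List (LEdge G)} {v : V} :
    endsAtL G (lshift G M l) v ↔ endsAtL G l v := by
  simp [endsAtL, lshift, List.getLast?_map]

theorem lshift_injective (M : Multiset (DEdge G)) : Function.Injective (lshift G M) :=
  List.map_injective_iff.mpr fun a b h => by
    simp only [Prod.mk.injEq] at h
    exact Prod.ext h.1 (by simpa [h.1] using h.2)

theorem pathsBetween_image_lshift (M : Multiset (DEdge G)) (T : Set (List (LEdge G))) (v w : V) :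
    pathsBetween G (lshift G M '' T) v w = lshift G M '' pathsBetween G T v w := by
  ext l
  constructor
  · rintro ⟨⟨l, hl, rfl⟩, hv, hw⟩
    exact ⟨l, ⟨hl, startsAtL_lshift G |>.mp hv, endsAtL_lshift G |>.mp hw⟩, rfl⟩
  · rintro ⟨l, ⟨hl, hv, hw⟩, rfl⟩
    exact ⟨⟨l, hl, rfl⟩, startsAtL_lshift G |>.mpr hv, endsAtL_lshift G |>.mpr hw⟩

variable {G}

theorem IsPathCount.image_lshift {T : Set (List (LEdge G))} {B : Matrix V V ℝ}
    (M : Multiset (DEdge G)) (hT : IsPathCount G T B) : IsPathCount G (lshift G M '' T) B := by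
  intro v w
  rw [pathsBetween_image_lshift, Nat.card_image_of_injective (lshift_injective G M)]
  exact ⟨(hT v w).1.image _, (hT v w).2⟩

theorem IsPathCount.smul [Fintype V] {x y : SMult G} {A B : Matrix V V ℝ}
    (hx : ∀ l ∈ x.2, LIsPathIn G x.1 l) (hA : IsPathCount G x.2 A) (hB : IsPathCount G y.2 B) :
    IsPathCount G (smul G x y).2 (op A B) := by
  let P : LEdge G → Prop := fun a => a.2 < x.1.count a.1
  have hS : ∀ l ∈ x.2, l ≠ [] ∧ ∀ a ∈ l, P a := fun l hl => ⟨(hx l hl).1, (hx l hl).2.2⟩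
  have hT : ∀ l ∈ lshift G x.1 '' y.2, ∀ a ∈ l, ¬ P a := by
    rintro _ ⟨l, -, rfl⟩ _ ha
    obtain ⟨a, -, rfl⟩ := List.mem_map.mp ha
    simp [P]
  have hB' := hB.image_lshift x.1
  exact (hA.union (disjoint_of_separated hS hT) hB').union
    (disjoint_union_concatSet_of_separated hS hT) (hA.concatSet hS hT hB')

theorem lt_count_edges_iff (D : DirSub G) (a : LEdge G) :
    a.2 < D.edges.val.count a.1 ↔ a.1 ∈ D.edges ∧ a.2 = 0 := by
  by_cases h : a.1 ∈ D.edges <;> simp [Multiset.count_eq_of_nodup D.edges.nodup, h]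

theorem lIsPathIn_edges_iff (D : DirSub G) (l : List (LEdge G)) :
    LIsPathIn G D.edges.val l ↔ IsPathIn G D.edges (l.map Prod.fst) ∧ ∀ a ∈ l, a.2 = 0 := by
  show (l ≠ [] ∧ l.IsChain _ ∧ _) ↔ (l.map Prod.fst ≠ [] ∧ (l.map Prod.fst).IsChain _ ∧ _) ∧ _
  simp only [lt_count_edges_iff, ne_eq, List.map_eq_nil_iff, List.isChain_map, List.forall_mem_map,
    forall_and, and_assoc]

theorem pathsBetween_toSM (D : DirSub G) (v w : V) :
    pathsBetween G (toSM G D).2 v w =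
      List.map (·, 0) '' {l | IsPathIn G D.edges l ∧ startsAt G l v ∧ endsAt G l w} := by
  ext l
  simp only [pathsBetween, toSM, Set.mem_image, Set.mem_ofPred_eq, lIsPathIn_edges_iff,
    startsAtL_iff_map_fst, endsAtL_iff_map_fst]
  constructor
  · rintro ⟨⟨hl, hzero⟩, hv, hw⟩
    refine ⟨l.map Prod.fst, ⟨hl, hv, hw⟩, ?_⟩
    calc (l.map Prod.fst).map (·, 0) = l.map id := by
          rw [List.map_map]
          exact List.map_congr_left fun a ha => Prod.ext rfl (hzero a ha).symm
      _ = l := List.map_id l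
  · rintro ⟨l, ⟨hl, hv, hw⟩, rfl⟩
    have hfst : (l.map (·, 0)).map Prod.fst = l := by simp [List.map_map, Function.comp_def]
    rw [hfst]
    exact ⟨⟨hl, by simp [eq_comm]⟩, hv, hw⟩

theorem isPathCount_toSM [Fintype V] (D : DirSub G) : IsPathCount G (toSM G D).2 (Rep G D) := by
  intro v w
  have hunique : {l | IsPathIn G D.edges l ∧ startsAt G l v ∧ endsAt G l w}.Subsingleton :=
    fun l₁ h₁ l₂ h₂ => D.uniquePath v w l₁ l₂ h₁.1 h₂.1 h₁.2.1 h₂.2.1 h₁.2.2 h₂.2.2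
  have hinj : Function.Injective (List.map (·, 0) : List (DEdge G) → List (LEdge G)) :=
    List.map_injective_iff.mpr fun a b h => congrArg Prod.fst h
  rw [pathsBetween_toSM, Nat.card_image_of_injective hinj, Rep, Matrix.of_apply]
  refine ⟨hunique.finite.image _, ?_⟩
  rcases hunique.eq_empty_or_singleton with h | ⟨l, h⟩
  · rw [if_neg fun ⟨l, hl⟩ => Set.notMem_empty l (h.subset hl), h]
    simp
  · rw [if_pos ⟨l, h.symm.subset rfl⟩, h]
    simp

theorem isPathCount_prodSM [Fintype V] (L : List (DirSub G)) :
    IsPathCount G (prodSM G L).2 (prodMat (L.map (Rep G))) := by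
  induction L with
  | nil => intro v w; simp [pathsBetween, prodSM, sone, prodMat]
  | cons D L ih => exact (isPathCount_toSM D).smul (fun _ hl => hl) ih

end Counting

variable {V : Type*} (G : SimpleGraph V) [DecidableEq V]

/-- The transformation `Tr`, sending `D₁ • D₂ • ⋯ • D_k ∈ Mod(G)` to
`Rep(D₁) ∘ Rep(D₂) ∘ ⋯ ∘ Rep(D_k)`, is well defined (independent of the
decomposition); the `(v, w)` entry of `Tr(M, S)` is the number of paths in `S`
from `v` to `w`; and `Tr` is a surjective monoid homomorphism from
`(Mod(G), •)` onto `(Mom(G), ∘)`. -/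
theorem tr_wellDefined_counts_surjective_hom [Fintype V] :
    (∀ L₁ L₂ : List (DirSub G), prodSM G L₁ = prodSM G L₂ →
      prodMat (L₁.map (Rep G)) = prodMat (L₂.map (Rep G))) ∧
    (∀ (L : List (DirSub G)) (v w : V),
      prodMat (L.map (Rep G)) v w =
        (Nat.card {l : List (LEdge G) //
          l ∈ (prodSM G L).2 ∧ startsAtL G l v ∧ endsAtL G l w} : ℝ)) ∧
    (∀ L₁ L₂ : List (DirSub G),
      prodMat ((L₁ ++ L₂).map (Rep G)) =
        op (prodMat (L₁.map (Rep G))) (prodMat (L₂.map (Rep G)))) ∧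
    (∀ B ∈ MomSet G, ∃ L : List (DirSub G), prodMat (L.map (Rep G)) = B) := by
  have counts (L : List (DirSub G)) (v w : V) := ((isPathCount_prodSM L v w).2).symm
  refine ⟨fun L₁ L₂ h => ?_, counts, fun L₁ L₂ => ?_, ?_⟩
  · ext v w
    rw [counts, counts, h]
  · rw [List.map_append, prodMat_append]
  · rintro B ⟨l, hl, rfl⟩
    obtain ⟨L, rfl⟩ : l ∈ Set.range (List.map (Rep G)) := by rwa [Set.range_list_map]
    exact ⟨L, rfl⟩

end GGNN
end

section
/- If G and H are graphs on n vertices and a permutation-induced Change-of-Order mapping f : Mat_n(ℝ) → Mat_n(ℝ) restricts to a monoid isomorphism from Mom(G) onto Mom(H) (with respect to A ∘ B = A + B + AB), then G and H are isomorphic graphs. -/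
open Matrix

namespace GGNN

variable {V : Type*} (G : SimpleGraph V)

variable [DecidableEq V]

/-- The permutation matrix of a permutation `σ` of the vertices. -/
def permMat (σ : Equiv.Perm V) : Matrix V V ℝ :=
  Matrix.of fun i j => if i = σ j then 1 else 0

end GGNN

/-! Conjugation by the permutation matrix of `σ` is the relabelling `reindex σ σ`, which sends
the matrix unit `E v w` to `E (σ v) (σ w)`. The matrix units lying in `Mom(G)` are exactly the
`E v w` with `v ~ w`: a single edge is a directed subgraph with `Rep = E v w`, and conversely a
`∘`-product of nonnegative matrices dominates each of its factors entrywise, so an edge `(a, b)`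
of any factor forces `(a, b) = (v, w)`. Hence `σ` itself is an isomorphism `G ≃g H`. -/

namespace GGNN

section ProdMat

variable {n : Type*} [Fintype n]

lemma op_zero_left (B : Matrix n n ℝ) : op 0 B = B := by
  simp [op]

lemma mul_apply_nonneg {A B : Matrix n n ℝ} (hA : ∀ i j, 0 ≤ A i j) (hB : ∀ i j, 0 ≤ B i j)
    (i j : n) : 0 ≤ (A * B) i j :=
  Finset.sum_nonneg fun k _ => mul_nonneg (hA i k) (hB k j)

lemma le_op_left {A B : Matrix n n ℝ} (hA : ∀ i j, 0 ≤ A i j) (hB : ∀ i j, 0 ≤ B i j)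
    (i j : n) : A i j ≤ op A B i j := by
  simp only [op, Matrix.add_apply]
  linarith [hB i j, mul_apply_nonneg hA hB i j]

lemma le_op_right {A B : Matrix n n ℝ} (hA : ∀ i j, 0 ≤ A i j) (hB : ∀ i j, 0 ≤ B i j)
    (i j : n) : B i j ≤ op A B i j := by
  simp only [op, Matrix.add_apply]
  linarith [hA i j, mul_apply_nonneg hA hB i j]

lemma op_apply_nonneg {A B : Matrix n n ℝ} (hA : ∀ i j, 0 ≤ A i j) (hB : ∀ i j, 0 ≤ B i j)
    (i j : n) : 0 ≤ op A B i j :=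
  (hA i j).trans (le_op_left hA hB i j)

lemma prodMat_apply_nonneg {L : List (Matrix n n ℝ)} (hL : ∀ A ∈ L, ∀ i j, 0 ≤ A i j) :
    ∀ i j, 0 ≤ prodMat L i j := by
  induction L with
  | nil => simp [prodMat]
  | cons A L ih =>
    exact op_apply_nonneg (hL A (by simp)) (ih fun B hB => hL B (by simp [hB]))

lemma le_prodMat_of_mem {L : List (Matrix n n ℝ)} (hL : ∀ A ∈ L, ∀ i j, 0 ≤ A i j)
    {A : Matrix n n ℝ} (hA : A ∈ L) (i j : n) : A i j ≤ prodMat L i j := by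
  induction L with
  | nil => simp at hA
  | cons B L ih =>
    have hB := hL B (by simp)
    have hL' : ∀ C ∈ L, ∀ i j, 0 ≤ C i j := fun C hC => hL C (by simp [hC])
    rcases List.mem_cons.1 hA with rfl | hA
    · exact le_op_left hB (prodMat_apply_nonneg hL') i j
    · exact (ih hL' hA).trans (le_op_right hB (prodMat_apply_nonneg hL') i j)

lemma exists_mem_ne_zero_of_prodMat_ne_zero {L : List (Matrix n n ℝ)} (h : prodMat L ≠ 0) :
    ∃ A ∈ L, A ≠ 0 := by
  induction L with
  | nil => exact absurd rfl h
  | cons A L ih =>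
    by_cases hA : A = 0
    · obtain ⟨B, hB, hB0⟩ := ih (by simpa [prodMat, hA, op_zero_left] using h)
      exact ⟨B, by simp [hB], hB0⟩
    · exact ⟨A, by simp, hA⟩

end ProdMat

section DirSub

variable {V : Type*} {G : SimpleGraph V}

lemma reaches_of_mem_edges {D : DirSub G} {e : DEdge G} (he : e ∈ D.edges) :
    Reaches G D e.1.1 e.1.2 :=
  ⟨[e], ⟨by simp, List.isChain_singleton _, by simpa using he⟩, ⟨e, by simp⟩, ⟨e, by simp⟩⟩

lemma eq_singleton_of_isPathIn_singleton {e : DEdge G} {l : List (DEdge G)}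
    (hl : IsPathIn G {e} l) : l = [e] := by
  obtain ⟨hne, hchain, hmem⟩ := hl
  simp only [Finset.mem_singleton] at hmem
  match l, hne, hchain, hmem with
  | [a], _, _, hmem => rw [hmem a (by simp)]
  | a :: b :: _, _, hchain, hmem =>
    rw [List.Chain', List.isChain_cons_cons, hmem a (by simp), hmem b (by simp)] at hchain
    exact absurd hchain.1.symm e.2.ne

lemma startsAt_singleton_iff {e : DEdge G} {v : V} : startsAt G [e] v ↔ e.1.1 = v := by
  simp [startsAt]

lemma endsAt_singleton_iff {e : DEdge G} {v : V} : endsAt G [e] v ↔ e.1.2 = v := by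
  simp [endsAt]

def singleSub (e : DEdge G) : DirSub G where
  edges := {e}
  connected := by
    rintro v w ⟨a, ha, hv⟩ ⟨b, hb, hw⟩
    rw [Finset.mem_singleton] at ha hb
    subst ha hb
    rcases hv with rfl | rfl <;> rcases hw with rfl | rfl
    all_goals first
      | exact .refl
      | exact .single ⟨_, Finset.mem_singleton_self _, by simp⟩
  uniquePath _ _ _ _ h₁ h₂ _ _ _ _ := by
    rw [eq_singleton_of_isPathIn_singleton h₁, eq_singleton_of_isPathIn_singleton h₂]
  acyclic v l hl hs he := by
    rw [eq_singleton_of_isPathIn_singleton hl, startsAt_singleton_iff] at hs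
    rw [eq_singleton_of_isPathIn_singleton hl, endsAt_singleton_iff] at he
    exact e.2.ne (hs.trans he.symm)

lemma reaches_singleSub_iff {e : DEdge G} {v w : V} :
    Reaches G (singleSub e) v w ↔ e.1.1 = v ∧ e.1.2 = w := by
  constructor
  · rintro ⟨l, hl, hs, he⟩
    rw [eq_singleton_of_isPathIn_singleton hl] at hs he
    exact ⟨startsAt_singleton_iff.1 hs, endsAt_singleton_iff.1 he⟩
  · rintro ⟨rfl, rfl⟩
    exact reaches_of_mem_edges (Finset.mem_singleton_self e)

end DirSub

section Rep

variable {V : Type*} {G : SimpleGraph V} [Fintype V]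

lemma rep_apply_nonneg (D : DirSub G) (v w : V) : 0 ≤ Rep G D v w := by
  simp only [Rep, Matrix.of_apply]
  split_ifs <;> norm_num

lemma rep_apply_of_mem_edges {D : DirSub G} {e : DEdge G} (he : e ∈ D.edges) :
    Rep G D e.1.1 e.1.2 = 1 := by
  simp [Rep, reaches_of_mem_edges he]

lemma edges_nonempty_of_rep_ne_zero {D : DirSub G} (h : Rep G D ≠ 0) : D.edges.Nonempty := by
  contrapose! h
  ext v w
  simp only [Rep, Matrix.of_apply, Matrix.zero_apply, ite_eq_right_iff]
  rintro ⟨_ | ⟨e, _⟩, ⟨hne, -, hmem⟩, -⟩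
  · exact absurd rfl hne
  · simpa [h] using hmem e (by simp)

lemma rep_singleSub [DecidableEq V] (e : DEdge G) :
    Rep G (singleSub e) = Matrix.single e.1.1 e.1.2 1 := by
  ext v w
  simp only [Rep, Matrix.of_apply, Matrix.single_apply, reaches_singleSub_iff]

end Rep

section MomSet

variable {V : Type*} {G : SimpleGraph V} [Fintype V] [DecidableEq V]

lemma single_mem_momSet_of_adj {v w : V} (h : G.Adj v w) :
    Matrix.single v w (1 : ℝ) ∈ MomSet G :=
  ⟨[Rep G (singleSub ⟨(v, w), h⟩)], by simp, by simp [op, rep_singleSub]⟩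

lemma adj_of_single_mem_momSet {v w : V} (h : Matrix.single v w (1 : ℝ) ∈ MomSet G) :
    G.Adj v w := by
  obtain ⟨L, hL, hprod⟩ := h
  change prodMat L = _ at hprod
  have hL_nonneg : ∀ A ∈ L, ∀ i j, 0 ≤ A i j := fun A hA => by
    obtain ⟨D, rfl⟩ := hL A hA
    exact rep_apply_nonneg D
  have hne : prodMat L ≠ 0 := fun h0 => by
    simpa [hprod] using congrFun (congrFun h0 v) w
  obtain ⟨A, hA, hA0⟩ := exists_mem_ne_zero_of_prodMat_ne_zero hne
  obtain ⟨D, rfl⟩ := hL A hA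
  obtain ⟨e, he⟩ := edges_nonempty_of_rep_ne_zero hA0
  have hpos : 0 < Matrix.single v w (1 : ℝ) e.1.1 e.1.2 :=
    calc (0 : ℝ) < 1 := one_pos
      _ = Rep G D e.1.1 e.1.2 := (rep_apply_of_mem_edges he).symm
      _ ≤ prodMat L e.1.1 e.1.2 := le_prodMat_of_mem hL_nonneg hA _ _
      _ = _ := by rw [hprod]
  obtain ⟨rfl, rfl⟩ : v = e.1.1 ∧ w = e.1.2 := by
    by_contra hvw
    rw [Matrix.single_apply, if_neg hvw] at hpos
    exact lt_irrefl _ hpos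
  exact e.2

lemma single_mem_momSet_iff {v w : V} : Matrix.single v w (1 : ℝ) ∈ MomSet G ↔ G.Adj v w :=
  ⟨adj_of_single_mem_momSet, single_mem_momSet_of_adj⟩

end MomSet

section PermMat

variable {V : Type*} [DecidableEq V]

lemma permMat_eq_toMatrix (σ : Equiv.Perm V) : permMat σ = σ.symm.toPEquiv.toMatrix := by
  ext i j
  simp only [permMat, Matrix.of_apply, PEquiv.toMatrix_apply, Equiv.toPEquiv_apply,
    Option.mem_def, Option.some.injEq, Equiv.symm_apply_eq]

lemma permMat_conj_eq_reindex [Fintype V] (σ : Equiv.Perm V) :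
    (fun A => permMat σ * A * (permMat σ)ᵀ) = Matrix.reindex σ σ := by
  ext A : 1
  rw [permMat_eq_toMatrix, ← PEquiv.toMatrix_symm, ← Equiv.toPEquiv_symm, Equiv.symm_symm,
    PEquiv.toMatrix_toPEquiv_mul, PEquiv.mul_toMatrix_toPEquiv, Matrix.submatrix_submatrix]
  rfl

lemma reindex_single {W α : Type*} [DecidableEq W] [Zero α] (σ τ : V ≃ W) (v w : V) (c : α) :
    Matrix.reindex σ τ (Matrix.single v w c) = Matrix.single (σ v) (τ w) c := by
  rw [Matrix.reindex_apply, Matrix.submatrix_single_equiv, Equiv.symm_symm, Equiv.symm_symm]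

end PermMat

variable {V : Type*} (G : SimpleGraph V) [DecidableEq V]

/-- If a Change-of-Order mapping `A ↦ P A Pᵀ` (conjugation by a permutation
matrix) restricts to a monoid isomorphism from `Mom(G)` onto `Mom(H)`, then
the graphs `G` and `H` are isomorphic. -/
theorem iso_of_changeOfOrder_mom_iso [Fintype V] (H : SimpleGraph V)
    (σ : Equiv.Perm V)
    (h : (fun A => permMat σ * A * (permMat σ)ᵀ) '' MomSet G = MomSet H) :
    Nonempty (G ≃g H) := by
  rw [permMat_conj_eq_reindex] at h
  refine ⟨⟨σ, fun {v w} => ?_⟩⟩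
  rw [← single_mem_momSet_iff, ← single_mem_momSet_iff, ← h, ← reindex_single,
    (Matrix.reindex σ σ).injective.mem_set_image]

end GGNN
end
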